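/- arXiv:math/0605523 — 6 statements merged into one kernel-verified Lean document; each statement's English description precedes it below -/
import Mathlib

section
/- Suppose A is a finite nonempty subset of a vector space over 𝔽₂ with |A+A| ≤ K|A|, and let s ≥ 1 be an integer. Then there exists a finite vector space G' over 𝔽₂ with |G'| ≤ K^(2s)|A|, a set A' ⊆ G', and a Freĭman s-isomorphism φ : A → A'. -/
open Finset Pointwise

/-!
For multisets `u, v` of `s` elements of `A`, the difference `u.sum - v.sum` lies in
`S = s • A - s • A`, which by Plünnecke–Ruzsa has at most `K ^ (2s) |A|` elements. Take a
subspace `V` maximal among those meeting `S` only in `0`. Over `𝔽₂`, adjoining any `x ∉ V` to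
`V` adds just the coset `x + V`, so maximality forces every coset of `V` to meet `S`, whence
`|G ⧸ V| ≤ |S|`.
The quotient map kills no nonzero element of `S`, so it separates `s`-fold sums from `A`: it is a
Freiman `s`-isomorphism of `A` onto its image.
-/

lemma Finset.multiset_sum_mem_nsmul {M : Type*} [AddCommMonoid M] [DecidableEq M] {A : Finset M}
    (u : Multiset M) (hu : ∀ x ∈ u, x ∈ A) : u.sum ∈ Multiset.card u • A := by
  rw [← Finset.mem_coe, Finset.coe_nsmul]
  simpa [Multiset.map_const', Multiset.sum_replicate] using
    Set.multiset_sum_mem_multiset_sum u (fun _ => (A : Set M)) id (by simpa)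

lemma AddMonoidHom.isAddFreimanIso_image_of_ker_inter_subset_zero {α β : Type*} [AddCommGroup α]
    [AddCommGroup β] [DecidableEq α] (f : α →+ β) {A : Finset α} {n : ℕ} (hn : n ≠ 0)
    (hf : ∀ x ∈ n • A - n • A, f x = 0 → x = 0) :
    IsAddFreimanIso n (A : Set α) (f '' A) f := by
  have map_sum_eq_iff : ∀ u v : Multiset α, (∀ x ∈ u, x ∈ A) → (∀ x ∈ v, x ∈ A) →
      Multiset.card u = n → Multiset.card v = n → (f u.sum = f v.sum ↔ u.sum = v.sum) := by
    intro u v hu hv hcu hcv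
    refine ⟨fun h => sub_eq_zero.1 (hf _ ?_ (by rw [map_sub, h, sub_self])), congrArg f⟩
    exact sub_mem_sub (hcu ▸ multiset_sum_mem_nsmul u hu) (hcv ▸ multiset_sum_mem_nsmul v hv)
  refine ⟨⟨Set.mapsTo_image f _, fun a ha b hb hab => ?_, Set.surjOn_image f _⟩,
    fun u v hu hv hcu hcv => by
      simpa only [map_multiset_sum] using map_sum_eq_iff u v hu hv hcu hcv⟩
  obtain ⟨m, rfl⟩ := Nat.exists_eq_succ_of_ne_zero hn
  have mem : ∀ c ∈ A, ∀ x ∈ c ::ₘ .replicate m a, x ∈ A := by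
    simp only [Multiset.mem_cons, Multiset.mem_replicate]
    rintro c hc x (rfl | ⟨-, rfl⟩) <;> assumption
  simpa using (map_sum_eq_iff _ _ (mem a ha) (mem b hb) (by simp) (by simp)).1 (by simp [hab])

namespace Submodule

lemma exists_maximal_inter_subset_zero {R M : Type*} [Ring R] [AddCommGroup M] [Module R M]
    (S : Set M) :
    ∃ V : Submodule R M, Maximal (fun W : Submodule R M => ∀ x ∈ W, x ∈ S → x = 0) V := by
  obtain ⟨V, -, hV⟩ := zorn_le_nonempty₀ {W : Submodule R M | ∀ x ∈ W, x ∈ S → x = 0}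
    (fun c hcS hc W hW => ⟨sSup c, fun x hx hxS => by
      obtain ⟨W', hW', hxW'⟩ := (mem_sSup_of_directed ⟨W, hW⟩ hc.directedOn).1 hx
      exact hcS hW' x hxW' hxS, fun _ => le_sSup⟩) ⊥
    (fun x hx _ => (mem_bot R).1 hx)
  exact ⟨V, hV⟩

lemma surjOn_mkQ_of_maximal_inter_subset_zero {M : Type*} [AddCommGroup M] [Module (ZMod 2) M]
    {S : Set M} (h0 : (0 : M) ∈ S) {V : Submodule (ZMod 2) M}
    (hV : Maximal (fun W : Submodule (ZMod 2) M => ∀ x ∈ W, x ∈ S → x = 0) V) :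
    Set.SurjOn V.mkQ S Set.univ := by
  rintro q -
  obtain ⟨x, rfl⟩ := V.mkQ_surjective q
  by_cases hxV : x ∈ V
  · exact ⟨0, h0, ((Quotient.mk_eq_zero V).2 hxV).symm⟩
  obtain ⟨y, hy, hyS, hy0⟩ : ∃ y ∈ V ⊔ span (ZMod 2) {x}, y ∈ S ∧ y ≠ 0 := by
    by_contra! h
    exact hxV (hV.eq_of_le h le_sup_left ▸ mem_sup_right (mem_span_singleton_self x))
  obtain ⟨v, hv, z, hz, rfl⟩ := mem_sup.1 hy
  obtain ⟨c, rfl⟩ := mem_span_singleton.1 hz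
  obtain rfl | rfl : c = 0 ∨ c = 1 := (by decide : ∀ a : ZMod 2, a = 0 ∨ a = 1) c
  · rw [zero_smul, add_zero] at hyS hy0
    exact absurd (hV.prop v hv hyS) hy0
  · refine ⟨_, hyS, ?_⟩
    simp [(Quotient.mk_eq_zero V).2 hv]

end Submodule

lemma exists_linearMap_card_le_of_ker_inter_subset_zero {M : Type*} [AddCommGroup M]
    [Module (ZMod 2) M] (S : Finset M) (h0 : (0 : M) ∈ S) :
    ∃ (d : ℕ) (f : M →ₗ[ZMod 2] Fin d → ZMod 2),
      Fintype.card (Fin d → ZMod 2) ≤ #S ∧ ∀ x ∈ S, f x = 0 → x = 0 := by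
  obtain ⟨V, hV⟩ := Submodule.exists_maximal_inter_subset_zero (R := ZMod 2) (S : Set M)
  have hsurj := Submodule.surjOn_mkQ_of_maximal_inter_subset_zero h0 hV
  have : Finite (M ⧸ V) :=
    Finite.of_surjective (fun y : S => V.mkQ y) fun q => by
      obtain ⟨y, hy, rfl⟩ := hsurj (Set.mem_univ q)
      exact ⟨⟨y, hy⟩, rfl⟩
  let : Fintype (M ⧸ V) := Fintype.ofFinite _
  let e := (Module.finBasis (ZMod 2) (M ⧸ V)).equivFun
  refine ⟨_, e.toLinearMap ∘ₗ V.mkQ, ?_, fun x hxS hx => hV.prop x ?_ hxS⟩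
  · rw [← Fintype.card_congr e.toEquiv, ← Finset.card_univ]
    exact card_le_card_of_surjOn _ (by simpa using hsurj)
  · simpa using hx

lemma card_nsmul_sub_nsmul_le {G : Type*} [AddCommGroup G] [DecidableEq G] {A : Finset G}
    (hA : A.Nonempty) {K : ℝ} (hadd : (#(A + A) : ℝ) ≤ K * #A) (s : ℕ) :
    (#(s • A - s • A) : ℝ) ≤ K ^ (2 * s) * #A := by
  have hA0 : (0 : ℝ) < #A := by exact_mod_cast hA.card_pos
  have hpr :=
    (NNRat.cast_le (K := ℝ)).2 (pluennecke_ruzsa_inequality_nsmul_sub_nsmul_add hA A s s)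
  push_cast at hpr
  calc (#(s • A - s • A) : ℝ) ≤ (#(A + A) / #A) ^ (s + s) * #A := hpr
    _ ≤ K ^ (2 * s) * #A := by
      rw [← two_mul]
      gcongr
      exact (div_le_iff₀ hA0).2 hadd

theorem good_model_general
    (G : Type*) [AddCommGroup G] [Module (ZMod 2) G] [DecidableEq G]
    (A : Finset G) (hA : A.Nonempty) (K : ℝ) (s : ℕ) (hs : 1 ≤ s)
    (hadd : ((A + A).card : ℝ) ≤ K * A.card) :
    ∃ (G' : Type) (_ : AddCommGroup G') (_ : Module (ZMod 2) G') (_ : Fintype G'),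
      (Fintype.card G' : ℝ) ≤ K ^ (2 * s) * A.card ∧
      ∃ (A' : Finset G') (φ : G → G'), IsAddFreimanIso s (A : Set G) (A' : Set G') φ := by
  obtain ⟨d, f, hcard, hker⟩ :=
    exists_linearMap_card_le_of_ker_inter_subset_zero (s • A - s • A)
      (zero_mem_sub_iff.2 (not_disjoint_iff_nonempty_inter.2 (by simpa using hA.nsmul)))
  refine ⟨Fin d → ZMod 2, inferInstance, inferInstance, inferInstance,
    (Nat.cast_le.2 hcard).trans (card_nsmul_sub_nsmul_le hA hadd s), A.image f, f, ?_⟩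
  rw [coe_image]
  exact f.toAddMonoidHom.isAddFreimanIso_image_of_ker_inter_subset_zero (by omega) hker

/-- Green–Ruzsa modelling lemma: a set of doubling `K` in a vector space over 𝔽₂ is
Freiman `s`-isomorphic to a subset of a finite 𝔽₂-vector space of size at most `K^{2s}|A|`. -/
theorem good_model
    (G : Type*) [AddCommGroup G] [Module (ZMod 2) G] [DecidableEq G]
    (A : Finset G) (hA : A.Nonempty) (K : ℝ) (hK : 1 ≤ K) (s : ℕ) (hs : 1 ≤ s)
    (hadd : ((A + A).card : ℝ) ≤ K * A.card) :
    ∃ (G' : Type) (_ : AddCommGroup G') (_ : Module (ZMod 2) G') (_ : Fintype G'),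
      (Fintype.card G' : ℝ) ≤ K ^ (2 * s) * A.card ∧
      ∃ (A' : Finset G') (φ : G → G'), IsAddFreimanIso s (A : Set G) (A' : Set G') φ :=
  good_model_general G A hA K s hs hadd
end

section
/- Let G = 𝔽₂ⁿ and let A ⊆ G be nonempty of density α = |A|/2ⁿ. Then 2A−2A = A+A+A+A contains a subspace of G of codimension at most C·α^(−1/2) for some absolute constant C. -/
/-!
A density increment argument. If every nontrivial Fourier coefficient of `A`
satisfies `|Â(ψ)| < α^{1/2} |A|`, then the Fourier expansion of the number of representations
`x = a₁ + a₂ + a₃ + a₄`, together with Parseval, shows that every `x` is represented, so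
`A + A + A + A` is the whole space. Otherwise some character `ψ ≠ 0` has a large coefficient;
over `𝔽₂` it takes the values `±1`, so one of the two cosets of the hyperplane `ker ψ` contains at
least `(|A| + |Â(ψ)|) / 2` points of `A`. Translating that part of `A` into `ker ψ` does not change
fourfold sums, and raises the density from `α` to at least `α + α^{3/2}`. Since
`4 / √α` then drops by at least one, induction on the dimension bounds the codimension by `4 / √α`.
-/

open Finset Pointwise

lemma one_add_four_div_sqrt_le {α β : ℝ} (hα : 0 < α) (hinc : α + α * √α ≤ β) (hβ : β ≤ 1) :
    1 + 4 / √β ≤ 4 / √α := by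
  set u := √α
  set v := √β
  have hu : 0 < u := Real.sqrt_pos.mpr hα
  have hv : 0 < v := Real.sqrt_pos.mpr (by nlinarith [Real.sqrt_nonneg α])
  have hv1 : v ≤ 1 := Real.sqrt_le_one.mpr hβ
  have hu2 : u ^ 2 = α := Real.sq_sqrt hα.le
  have hv2 : v ^ 2 = β := Real.sq_sqrt (by nlinarith [Real.sqrt_nonneg α])
  have hgap : u ^ 2 + u ^ 3 ≤ v ^ 2 := by rw [hu2, hv2]; nlinarith
  -- If `4 (v - u) < u v` then `v < 5u/4`, so `u³ ≤ (v - u)(v + u) < u v (v + u) / 4 < u³`.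
  have hkey : u * v + 4 * u ≤ 4 * v := by
    nlinarith [mul_pos hu hu, mul_pos hu hv, mul_nonneg (mul_nonneg hu.le hu.le) (sub_nonneg.mpr hv1)]
  rw [add_div' _ _ _ hv.ne', div_le_div_iff₀ hv hu]
  nlinarith

lemma mul_sqrt_le_div_of_pow_three_le {a N s : ℝ} (ha : 0 ≤ a) (hN : 0 < N) (hs : 0 ≤ s)
    (h : a ^ 3 ≤ N * s ^ 2) : a / N * √(a / N) ≤ s / N := by
  have haN : 0 ≤ a / N := by positivity
  have hsq : (a / N * √(a / N)) ^ 2 ≤ (s / N) ^ 2 := by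
    calc (a / N * √(a / N)) ^ 2 = a ^ 3 / N ^ 3 := by rw [mul_pow, Real.sq_sqrt haN]; ring
      _ ≤ N * s ^ 2 / N ^ 3 := by gcongr
      _ = (s / N) ^ 2 := by field_simp
  exact (pow_le_pow_iff_left₀ (by positivity) (by positivity) two_ne_zero).mp hsq

section Fourier

variable {G : Type*} [AddCommGroup G] [Fintype G] [DecidableEq G]

def charSum (A : Finset G) (ψ : AddChar G ℂ) : ℂ := ∑ a ∈ A, ψ a

lemma sum_norm_charSum_sq (A : Finset G) :
    ∑ ψ : AddChar G ℂ, ‖charSum A ψ‖ ^ 2 = Fintype.card G * #A := by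
  have h (ψ : AddChar G ℂ) : ((‖charSum A ψ‖ ^ 2 : ℝ) : ℂ) = ∑ a ∈ A, ∑ b ∈ A, ψ (a - b) := by
    rw [← Complex.normSq_eq_norm_sq, ← Complex.mul_conj, charSum, map_sum, sum_mul_sum]
    simp [sub_eq_add_neg, AddChar.map_add_eq_mul, AddChar.map_neg_eq_conj]
  apply Complex.ofReal_injective
  push_cast [h]
  rw [sum_comm]
  simp_rw [sum_comm (s := univ), AddChar.sum_apply_eq_ite, sub_eq_zero]
  simp [mul_comm]

lemma sum_apply_neg_mul_charSum_pow_four_eq_zero {A : Finset G} {x : G}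
    (hx : x ∉ A + A + A + A) :
    ∑ ψ : AddChar G ℂ, ψ (-x) * charSum A ψ ^ 4 = 0 := by
  have hexpand (ψ : AddChar G ℂ) : ψ (-x) * charSum A ψ ^ 4 =
      ∑ a ∈ A, ∑ b ∈ A, ∑ c ∈ A, ∑ d ∈ A, ψ (a + b + c + d - x) := by
    have (a b c d : G) : ψ (a + b + c + d - x) = ψ (-x) * ψ a * ψ b * ψ c * ψ d := by
      simp only [sub_eq_add_neg, AddChar.map_add_eq_mul]; ring
    simp only [this, ← mul_sum, ← sum_mul, charSum]
    ring
  simp_rw [hexpand]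
  rw [sum_comm]
  refine sum_eq_zero fun a ha => ?_
  rw [sum_comm]
  refine sum_eq_zero fun b hb => ?_
  rw [sum_comm]
  refine sum_eq_zero fun c hc => ?_
  rw [sum_comm]
  refine sum_eq_zero fun d hd => ?_
  rw [AddChar.sum_apply_eq_ite, if_neg (sub_ne_zero.mpr ?_)]
  rintro rfl
  exact hx (add_mem_add (add_mem_add (add_mem_add ha hb) hc) hd)

lemma fourfold_sumset_eq_univ_of_fourier_uniform {A : Finset G} (hA : A.Nonempty)
    (hunif : ∀ ψ : AddChar G ℂ, ψ ≠ 0 → Fintype.card G * ‖charSum A ψ‖ ^ 2 < #A ^ 3) :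
    A + A + A + A = univ := by
  refine eq_univ_of_forall fun x => ?_
  by_contra hx
  have hsum := sum_apply_neg_mul_charSum_pow_four_eq_zero hx
  have h0 : charSum A 0 = #A := by simp [charSum]
  rw [← add_sum_erase _ _ (mem_univ 0), AddChar.zero_apply, h0, one_mul] at hsum
  have hnonzero_energy : (#A : ℝ) ^ 4 ≤ ∑ ψ ∈ univ.erase 0, ‖charSum A ψ‖ ^ 4 :=
    calc (#A : ℝ) ^ 4 = ‖∑ ψ ∈ univ.erase 0, ψ (-x) * charSum A ψ ^ 4‖ := by
          rw [eq_neg_of_add_eq_zero_right hsum, norm_neg]; simp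
      _ ≤ ∑ ψ ∈ univ.erase 0, ‖ψ (-x) * charSum A ψ ^ 4‖ := norm_sum_le _ _
      _ = ∑ ψ ∈ univ.erase 0, ‖charSum A ψ‖ ^ 4 := by simp [AddChar.norm_apply]
  have hparseval : ∑ ψ ∈ univ.erase 0, ‖charSum A ψ‖ ^ 2 = Fintype.card G * #A - #A ^ 2 := by
    rw [← sum_norm_charSum_sq A, ← add_sum_erase _ _ (mem_univ 0), h0]; simp
  have hbound : Fintype.card G * ∑ ψ ∈ univ.erase 0, ‖charSum A ψ‖ ^ 4
      ≤ #A ^ 3 * ∑ ψ ∈ univ.erase 0, ‖charSum A ψ‖ ^ 2 := by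
    rw [mul_sum, mul_sum]
    refine sum_le_sum fun ψ hψ => ?_
    have := hunif ψ (ne_of_mem_erase hψ)
    nlinarith [sq_nonneg ‖charSum A ψ‖]
  have hApos : (0 : ℝ) < #A := by exact_mod_cast hA.card_pos
  have hG : (0 : ℝ) < Fintype.card G := by exact_mod_cast Fintype.card_pos
  rw [hparseval] at hbound
  nlinarith [mul_le_mul_of_nonneg_left hnonzero_energy hG.le, pow_pos hApos 5]

end Fourier

section CharTwo

variable {V : Type*} [AddCommGroup V] [Module (ZMod 2) V]

lemma AddChar.apply_eq_neg_one_of_ne_one {ψ : AddChar V ℂ} {x : V} (h : ψ x ≠ 1) :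
    ψ x = -1 := by
  have : ψ x * ψ x = 1 := by
    rw [← AddChar.map_add_eq_mul, ZModModule.add_self, AddChar.map_zero_eq_one]
  exact (mul_self_eq_one_iff.mp this).resolve_left h

def charKer (ψ : AddChar V ℂ) : Submodule (ZMod 2) V :=
  AddSubgroup.toZModSubmodule 2
    { carrier := {x | ψ x = 1}
      add_mem' := by
        intro a b ha hb
        simp_all [AddChar.map_add_eq_mul]
      zero_mem' := ψ.map_zero_eq_one
      neg_mem' := by
        intro a ha
        simp_all [AddChar.map_neg_eq_inv] }

lemma mem_charKer {ψ : AddChar V ℂ} {x : V} : x ∈ charKer ψ ↔ ψ x = 1 := .rfl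

lemma charSum_eq_card_filter_sub (A : Finset V) (ψ : AddChar V ℂ) :
    charSum A ψ = #{a ∈ A | ψ a = 1} - #{a ∈ A | ψ a ≠ 1} := by
  rw [charSum, ← sum_filter_add_sum_filter_not A (fun a => ψ a = 1),
    sum_congr rfl fun a ha => (mem_filter.1 ha).2,
    sum_congr rfl fun a ha => AddChar.apply_eq_neg_one_of_ne_one (mem_filter.1 ha).2]
  simp [sub_eq_add_neg]

lemma exists_card_filter_translate_ge {ψ : AddChar V ℂ} (hψ : ψ ≠ 0) (A : Finset V) :
    ∃ x₀, #A + ‖charSum A ψ‖ ≤ 2 * #{a ∈ A | ψ (a + x₀) = 1} := by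
  set p := #{a ∈ A | ψ a = 1}
  set q := #{a ∈ A | ψ a ≠ 1}
  have hpq : p + q = #A := card_filter_add_card_filter_not _
  have hnorm : ‖charSum A ψ‖ = |(p : ℝ) - q| := by
    rw [charSum_eq_card_filter_sub, ← Real.norm_eq_abs, ← Complex.norm_real]
    push_cast
    rfl
  rcases le_total q p with hqp | hpq'
  · refine ⟨0, ?_⟩
    simp only [add_zero]
    rw [hnorm, abs_of_nonneg (sub_nonneg.mpr (by exact_mod_cast hqp)), ← hpq]
    push_cast; linarith
  · obtain ⟨x₀, hx₀⟩ := AddChar.ne_zero_iff.mp hψ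
    refine ⟨x₀, ?_⟩
    have hflip : {a ∈ A | ψ (a + x₀) = 1} = {a ∈ A | ψ a ≠ 1} := by
      refine filter_congr fun a _ => ?_
      rw [AddChar.map_add_eq_mul, AddChar.apply_eq_neg_one_of_ne_one hx₀]
      exact ⟨fun h h' => by norm_num [h'] at h,
        fun h => by rw [AddChar.apply_eq_neg_one_of_ne_one h]; norm_num⟩
    rw [hflip, hnorm, abs_of_nonpos (sub_nonpos.mpr (by exact_mod_cast hpq')), ← hpq]
    push_cast; linarith

lemma two_mul_natCard_charKer [Finite V] {ψ : AddChar V ℂ} (hψ : ψ ≠ 0) :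
    2 * Nat.card (charKer ψ) = Nat.card V := by
  have := Fintype.ofFinite V
  have hsum : charSum univ ψ = 0 := AddChar.sum_eq_zero_iff_ne_zero.mpr hψ
  rw [charSum_eq_card_filter_sub, sub_eq_zero] at hsum
  have hbalance : #{a | ψ a = 1} = #{a | ψ a ≠ 1} := by exact_mod_cast hsum
  have hsplit := card_filter_add_card_filter_not (s := univ) (fun a => ψ a = 1)
  have hker : Nat.card (charKer ψ) = #{a | ψ a = 1} := by
    classical
    rw [Nat.card_eq_fintype_card, Fintype.card_subtype]
    simp only [mem_charKer]
  rw [hker, Nat.card_eq_fintype_card, ← card_univ, ← hsplit, hbalance]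
  ring

lemma finrank_charKer_add_one [Finite V] {ψ : AddChar V ℂ} (hψ : ψ ≠ 0) :
    Module.finrank (ZMod 2) (charKer ψ) + 1 = Module.finrank (ZMod 2) V := by
  have h := two_mul_natCard_charKer hψ
  rw [Module.natCard_eq_pow_finrank (K := ZMod 2),
    Module.natCard_eq_pow_finrank (K := ZMod 2) (V := V), Nat.card_zmod, ← pow_succ'] at h
  exact Nat.pow_right_injective le_rfl h

variable [DecidableEq V]

lemma Finset.fourfold_add_singleton (A : Finset V) (x : V) :
    (A + {x}) + (A + {x}) + (A + {x}) + (A + {x}) = A + A + A + A := by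
  calc _ = A + A + A + A + ({x} + {x} + ({x} + {x})) := by abel
    _ = A + A + A + A := by simp [singleton_add_singleton, ZModModule.add_self, singleton_zero]

lemma exists_finset_charKer_fourfold_subset {ψ : AddChar V ℂ} (hψ : ψ ≠ 0) (A : Finset V) :
    ∃ B : Finset (charKer ψ), #A + ‖charSum A ψ‖ ≤ 2 * #B ∧
      (B + B + B + B).image (charKer ψ).subtype ⊆ A + A + A + A := by
  classical
  obtain ⟨x₀, hx₀⟩ := exists_card_filter_translate_ge hψ A
  set A' := {a ∈ A | ψ (a + x₀) = 1} + {x₀}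
  have hA'ker : ∀ y ∈ A', y ∈ charKer ψ := by
    intro y hy
    obtain ⟨a, ha, b, hb, rfl⟩ := mem_add.mp hy
    obtain rfl := mem_singleton.mp hb
    exact (mem_filter.mp ha).2
  refine ⟨A'.subtype (· ∈ charKer ψ), ?_, ?_⟩
  · rwa [card_subtype, filter_true_of_mem hA'ker, card_add_singleton]
  · have himage : (A'.subtype (· ∈ charKer ψ)).image (charKer ψ).subtype = A' := by
      conv_rhs => rw [← subtype_map_of_mem hA'ker, map_eq_image]
      rfl
    rw [image_add, image_add, image_add, himage, ← fourfold_add_singleton A x₀]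
    have hA'A : A' ⊆ A + {x₀} := add_subset_add_right (filter_subset _ _)
    gcongr

variable [Finite V]

lemma exists_finset_charKer_density_increment {A : Finset V} (hA : A.Nonempty) {ψ : AddChar V ℂ} (hψ : ψ ≠ 0)
    (hlarge : #A ^ 3 ≤ Nat.card V * ‖charSum A ψ‖ ^ 2) :
    ∃ B : Finset (charKer ψ), B.Nonempty ∧
      (B + B + B + B).image (charKer ψ).subtype ⊆ A + A + A + A ∧
      #A / Nat.card V + #A / Nat.card V * √(#A / Nat.card V) ≤ (#B : ℝ) / Nat.card (charKer ψ) := by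
  obtain ⟨B, hB, hBA⟩ := exists_finset_charKer_fourfold_subset hψ A
  refine ⟨B, ?_, hBA, ?_⟩
  · rw [← card_pos, ← Nat.cast_pos (α := ℝ)]
    linarith [norm_nonneg (charSum A ψ), (Nat.cast_pos (α := ℝ)).mpr hA.card_pos]
  have hK : (Nat.card V : ℝ) = 2 * Nat.card (charKer ψ) := by
    exact_mod_cast (two_mul_natCard_charKer hψ).symm
  have hVpos : (0 : ℝ) < Nat.card V := by exact_mod_cast Nat.card_pos
  have hcoeff := mul_sqrt_le_div_of_pow_three_le (Nat.cast_nonneg #A) hVpos (norm_nonneg _) hlarge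
  calc _ ≤ #A / Nat.card V + ‖charSum A ψ‖ / Nat.card V := by gcongr
    _ = (#A + ‖charSum A ψ‖) / Nat.card V := by ring
    _ ≤ 2 * #B / Nat.card V := by gcongr
    _ = #B / Nat.card (charKer ψ) := by rw [hK]; field_simp

theorem exists_submodule_subset_fourfold_sumset (A : Finset V) (hA : A.Nonempty) :
    ∃ U : Submodule (ZMod 2) V, (U : Set V) ⊆ ↑(A + A + A + A) ∧
      (Module.finrank (ZMod 2) V : ℝ) - Module.finrank (ZMod 2) U ≤ 4 / √(#A / Nat.card V) := by
  induction hn : Module.finrank (ZMod 2) V using Nat.strong_induction_on generalizing V with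
  | _ n ih =>
  have := Fintype.ofFinite V
  by_cases huniform : ∀ ψ : AddChar V ℂ, ψ ≠ 0 → Fintype.card V * ‖charSum A ψ‖ ^ 2 < #A ^ 3
  · refine ⟨⊤, ?_, ?_⟩
    · simp [fourfold_sumset_eq_univ_of_fourier_uniform hA huniform]
    · rw [finrank_top, hn, sub_self]
      positivity
  push Not at huniform
  obtain ⟨ψ, hψ, hlarge⟩ := huniform
  rw [← Nat.card_eq_fintype_card] at hlarge
  obtain ⟨B, hBne, hBA, hincrement⟩ := exists_finset_charKer_density_increment hA hψ hlarge
  have hrank := finrank_charKer_add_one hψ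
  obtain ⟨U, hUB, hUcodim⟩ := ih _ (by omega) B hBne rfl
  refine ⟨U.map (charKer ψ).subtype, ?_, ?_⟩
  · rintro _ ⟨y, hy, rfl⟩
    exact hBA (mem_image_of_mem _ (hUB hy))
  have hBK : (#B : ℝ) / Nat.card (charKer ψ) ≤ 1 := by
    have := Fintype.ofFinite (charKer ψ)
    rw [div_le_one (by exact_mod_cast Nat.card_pos), Nat.card_eq_fintype_card]
    exact_mod_cast card_le_univ B
  have hα : 0 < (#A : ℝ) / Nat.card V :=
    div_pos (by exact_mod_cast hA.card_pos) (by exact_mod_cast Nat.card_pos)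
  have hstep := one_add_four_div_sqrt_le hα hincrement hBK
  rw [Submodule.finrank_map_subtype_eq, ← hn, ← hrank]
  push_cast
  linarith

end CharTwo

/-- If `A ⊆ 𝔽₂ⁿ` has density `α` then `A+A+A+A` contains a subspace of codimension
`O(α^{-1/2})`. -/
theorem fourfold_sumset_contains_subspace :
    ∃ C : ℝ, 0 < C ∧
      ∀ (n : ℕ) (A : Finset (Fin n → ZMod 2)), A.Nonempty →
        ∃ V : Submodule (ZMod 2) (Fin n → ZMod 2),
          (V : Set (Fin n → ZMod 2)) ⊆ (↑(A + A + A + A) : Set (Fin n → ZMod 2)) ∧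
          ((n : ℝ) - Module.finrank (ZMod 2) V) ≤
            C * ((A.card : ℝ) / 2 ^ n) ^ (-(1 : ℝ) / 2) := by
  refine ⟨4, by norm_num, fun n A hA => ?_⟩
  obtain ⟨V, hVA, hcodim⟩ := exists_submodule_subset_fourfold_sumset A hA
  refine ⟨V, hVA, ?_⟩
  have hdensity : 0 ≤ (#A : ℝ) / 2 ^ n := by positivity
  rw [Module.finrank_fin_fun, Nat.card_eq_fintype_card, Fintype.card_fun, ZMod.card,
    Fintype.card_fin] at hcodim
  rw [neg_div, Real.rpow_neg hdensity, ← Real.sqrt_eq_rpow, ← div_eq_mul_inv]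
  exact_mod_cast hcodim
end

section
/- Let G = 𝔽₂ⁿ and A ⊆ G nonempty of density α. Then at least one of the following holds: (i) A+A+A+A = G; or (ii) there exist a subspace W ≤ G of codimension 1, an element x ∈ G, and a set A' ⊆ W with x+A' ⊆ A and |A'|/|W| ≥ α(1 + α^(1/2)/2). -/
open Finset Pointwise

/-! Write `Â(ξ) = ∑ a ∈ A, (-1) ^ (ξ ⬝ a)`. If `t ∉ A + A + A + A`, the equation
`a + b + c + d = t` has no solution in `A`, so by Fourier inversion
`∑ ξ, Â(ξ)⁴ (-1) ^ (ξ ⬝ t) = 0` and the trivial term `|A|⁴` must be cancelled by the others.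
With Parseval, `∑ ξ, Â(ξ)² = 2ⁿ |A|`, this forces some `ξ ≠ 0` with `Â(ξ)² ≥ |A|³ / 2ⁿ`, that is
`|Â(ξ)| ≥ √α |A|`. As `Â(ξ)` is the difference of the sizes of `A` on the two cosets of
`ker ξ`, one of them holds at least `(1 + √α) |A| / 2` points of `A`; translating it onto
`ker ξ` gives density at least `α (1 + √α)` there. -/

lemma AddChar.map_sum_eq_prod {A M ι : Type*} [AddCommMonoid A] [CommMonoid M]
    (ψ : AddChar A M) (s : Finset ι) (f : ι → A) :
    ψ (∑ i ∈ s, f i) = ∏ i ∈ s, ψ (f i) := by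
  induction s using Finset.cons_induction with
  | empty => simp
  | cons i s _ ih => rw [sum_cons, prod_cons, AddChar.map_add_eq_mul, ih]

lemma ZMod.ne_zero_iff_eq_one_mod_two {a : ZMod 2} : a ≠ 0 ↔ a = 1 := by
  revert a; decide

namespace WalshFourier

variable {ι : Type*} [Fintype ι]

noncomputable def walsh (ξ : ι → ZMod 2) : AddChar (ι → ZMod 2) ℝ :=
  (AddChar.zmodChar 2 (by norm_num : (-1 : ℝ) ^ 2 = 1)).compAddMonoidHom
    (AddMonoidHom.mk' (ξ ⬝ᵥ ·) (dotProduct_add ξ))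

lemma walsh_apply (ξ x : ι → ZMod 2) : walsh ξ x = if ξ ⬝ᵥ x = 0 then 1 else -1 := by
  rw [walsh, AddChar.compAddMonoidHom_apply, AddChar.zmodChar_apply, AddMonoidHom.mk'_apply]
  split_ifs with h
  · rw [h, ZMod.val_zero, pow_zero]
  · rw [ZMod.ne_zero_iff_eq_one_mod_two.mp h, ZMod.val_one, pow_one]

lemma walsh_comm (ξ x : ι → ZMod 2) : walsh ξ x = walsh x ξ := by
  rw [walsh_apply, walsh_apply, dotProduct_comm]

lemma neg_one_le_walsh (ξ x : ι → ZMod 2) : -1 ≤ walsh ξ x := by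
  rw [walsh_apply]; split_ifs <;> norm_num

lemma walsh_eq_zero_iff {ξ : ι → ZMod 2} : walsh ξ = 0 ↔ ξ = 0 := by
  classical
  refine ⟨fun h ↦ ?_, fun h ↦ ?_⟩
  · by_contra hξ
    obtain ⟨i, hi⟩ : ∃ i, ξ i ≠ 0 := Function.ne_iff.mp hξ
    have := DFunLike.congr_fun h (Pi.single i 1)
    norm_num [walsh_apply, dotProduct_single, hi] at this
  · ext x
    simp [walsh_apply, h]

noncomputable def fourierCoeff (A : Finset (ι → ZMod 2)) (ξ : ι → ZMod 2) : ℝ :=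
  ∑ a ∈ A, walsh ξ a

lemma fourierCoeff_zero (A : Finset (ι → ZMod 2)) : fourierCoeff A 0 = #A := by
  simp [fourierCoeff, walsh_apply]

lemma fourierCoeff_pow_eq_sum (A : Finset (ι → ZMod 2)) (ξ : ι → ZMod 2) (k : ℕ) :
    fourierCoeff A ξ ^ k =
      ∑ p ∈ Fintype.piFinset fun _ : Fin k ↦ A, walsh ξ (∑ i, p i) := by
  simp_rw [AddChar.map_sum_eq_prod, ← prod_univ_sum, prod_const, card_univ,
    Fintype.card_fin, fourierCoeff]

section

variable [DecidableEq ι]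

lemma sum_walsh_apply (x : ι → ZMod 2) :
    ∑ ξ, walsh ξ x = if x = 0 then (Fintype.card (ι → ZMod 2) : ℝ) else 0 := by
  simp_rw [walsh_comm _ x, AddChar.sum_eq_ite, walsh_eq_zero_iff]

lemma sum_fourierCoeff_pow_mul_walsh (A : Finset (ι → ZMod 2)) (k : ℕ) (t : ι → ZMod 2) :
    ∑ ξ, fourierCoeff A ξ ^ k * walsh ξ t =
      Fintype.card (ι → ZMod 2) *
        #{p ∈ Fintype.piFinset fun _ : Fin k ↦ A | ∑ i, p i = t} := by
  simp_rw [fourierCoeff_pow_eq_sum, sum_mul, ← AddChar.map_add_eq_mul]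
  rw [sum_comm]
  simp_rw [sum_walsh_apply, add_eq_zero_iff_eq_neg, ZModModule.neg_eq_self]
  rw [sum_ite, sum_const_zero, add_zero, sum_const, nsmul_eq_mul, mul_comm]

lemma sum_fourierCoeff_sq (A : Finset (ι → ZMod 2)) :
    ∑ ξ, fourierCoeff A ξ ^ 2 = Fintype.card (ι → ZMod 2) * #A := by
  have h := sum_fourierCoeff_pow_mul_walsh A 2 0
  simp only [AddChar.map_zero_eq_one, mul_one] at h
  rw [h]
  congr 2
  refine card_nbij' (· 0) (fun a ↦ ![a, a]) ?_ ?_ ?_ ?_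
  · intro p hp
    simp only [mem_coe, mem_filter, Fintype.mem_piFinset] at hp
    exact hp.1 0
  · intro a ha
    simp_all [Fin.forall_fin_two, ZModModule.add_self]
  · intro p hp
    simp only [mem_coe, mem_filter, Fin.sum_univ_two, add_eq_zero_iff_eq_neg,
      ZModModule.neg_eq_self] at hp
    ext i : 1
    fin_cases i <;> simp [hp.2]
  · exact fun _ _ ↦ rfl

lemma sum_fourierCoeff_pow_four_mul_walsh_eq_zero {A : Finset (ι → ZMod 2)} {t : ι → ZMod 2}
    (ht : t ∉ A + A + A + A) : ∑ ξ, fourierCoeff A ξ ^ 4 * walsh ξ t = 0 := by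
  rw [sum_fourierCoeff_pow_mul_walsh, card_eq_zero.mpr, Nat.cast_zero, mul_zero]
  refine filter_false_of_mem fun p hp hpt ↦ ht ?_
  rw [Fintype.mem_piFinset] at hp
  rw [← hpt, Fin.sum_univ_four]
  exact add_mem_add (add_mem_add (add_mem_add (hp 0) (hp 1)) (hp 2)) (hp 3)

lemma card_pow_four_le_sum_fourierCoeff_pow_four {A : Finset (ι → ZMod 2)} {t : ι → ZMod 2}
    (ht : t ∉ A + A + A + A) :
    (#A : ℝ) ^ 4 ≤ ∑ ξ ∈ univ.erase 0, fourierCoeff A ξ ^ 4 := by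
  have h := sum_fourierCoeff_pow_four_mul_walsh_eq_zero ht
  rw [← add_sum_erase _ _ (mem_univ 0), fourierCoeff_zero, walsh_eq_zero_iff.mpr rfl,
    AddChar.zero_apply, mul_one, add_eq_zero_iff_eq_neg, ← sum_neg_distrib] at h
  rw [h]
  refine sum_le_sum fun ξ _ ↦ ?_
  nlinarith [neg_one_le_walsh ξ t, pow_two_nonneg (fourierCoeff A ξ ^ 2)]

lemma sum_erase_zero_fourierCoeff_sq (A : Finset (ι → ZMod 2)) :
    ∑ ξ ∈ univ.erase 0, fourierCoeff A ξ ^ 2 =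
      Fintype.card (ι → ZMod 2) * #A - (#A : ℝ) ^ 2 := by
  rw [← sum_fourierCoeff_sq, ← add_sum_erase _ _ (mem_univ 0), fourierCoeff_zero,
    add_sub_cancel_left]

lemma exists_fourierCoeff_sq_ge {A : Finset (ι → ZMod 2)} (hA : A.Nonempty) {t : ι → ZMod 2}
    (ht : t ∉ A + A + A + A) :
    ∃ ξ ≠ 0, (#A : ℝ) ^ 3 / Fintype.card (ι → ZMod 2) ≤ fourierCoeff A ξ ^ 2 := by
  set N : ℝ := (Fintype.card (ι → ZMod 2) : ℝ)
  set K : ℝ := (#A : ℝ)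
  have hN : 0 < N := by positivity
  have hK : 0 < K := by positivity
  by_contra! hsmall
  have hfourth : ∑ ξ ∈ univ.erase 0, fourierCoeff A ξ ^ 4 ≤
      K ^ 3 / N * ∑ ξ ∈ univ.erase 0, fourierCoeff A ξ ^ 2 := by
    rw [mul_sum]
    refine sum_le_sum fun ξ hξ ↦ ?_
    have := (hsmall ξ (ne_of_mem_erase hξ)).le
    nlinarith [sq_nonneg (fourierCoeff A ξ)]
  have hlt : K ^ 3 / N * (N * K - K ^ 2) < K ^ 4 := by
    field_simp
    nlinarith [pow_pos hK 5]
  rw [sum_erase_zero_fourierCoeff_sq] at hfourth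
  linarith [card_pow_four_le_sum_fourierCoeff_pow_four ht]

end

lemma fourierCoeff_eq_card_sub_card (A : Finset (ι → ZMod 2)) (ξ : ι → ZMod 2) :
    fourierCoeff A ξ = #{a ∈ A | ξ ⬝ᵥ a = 0} - #{a ∈ A | ξ ⬝ᵥ a = 1} := by
  simp_rw [fourierCoeff, walsh_apply, sum_ite, sum_const, nsmul_eq_mul, mul_one,
    mul_neg_one, ZMod.ne_zero_iff_eq_one_mod_two, sub_eq_add_neg]

lemma exists_card_filter_dotProduct_ge (A : Finset (ι → ZMod 2)) (ξ : ι → ZMod 2) :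
    ∃ v, #A + |fourierCoeff A ξ| ≤ 2 * #{a ∈ A | ξ ⬝ᵥ a = v} := by
  have hsplit : (#{a ∈ A | ξ ⬝ᵥ a = 0} : ℝ) + #{a ∈ A | ξ ⬝ᵥ a = 1} = #A := by
    simp_rw [← ZMod.ne_zero_iff_eq_one_mod_two]
    exact_mod_cast card_filter_add_card_filter_not _
  rw [fourierCoeff_eq_card_sub_card]
  rcases le_total (#{a ∈ A | ξ ⬝ᵥ a = 1} : ℝ) #{a ∈ A | ξ ⬝ᵥ a = 0} with h | h
  · exact ⟨0, by rw [abs_of_nonneg (sub_nonneg.mpr h)]; linarith⟩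
  · exact ⟨1, by rw [abs_of_nonpos (sub_nonpos.mpr h)]; linarith⟩

end WalshFourier

section Hyperplane

variable {V : Type*} [AddCommGroup V] [Module (ZMod 2) V] {f : Module.Dual (ZMod 2) V}

lemma exists_translate_subset_ker [DecidableEq V] (hf : f ≠ 0) (A : Finset V) (v : ZMod 2) :
    ∃ (x : V) (A' : Finset V), (A' : Set V) ⊆ LinearMap.ker f ∧ A'.image (x + ·) ⊆ A ∧
      #A' = #{a ∈ A | f a = v} := by
  obtain ⟨x, hx⟩ := LinearMap.surjective hf v
  refine ⟨x, {a ∈ A | f a = v}.image (x + ·), ?_, ?_,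
    card_image_of_injective _ (add_right_injective x)⟩
  · simp only [coe_image, coe_filter, Set.image_subset_iff]
    intro a ha
    simp [ha.2, hx, ZModModule.add_self]
  · simp only [image_image, Function.comp_def, ← add_assoc, ZModModule.add_self, zero_add,
      image_id']
    exact filter_subset _ _

lemma two_mul_card_ker [Module.Finite (ZMod 2) V] (hf : f ≠ 0) :
    2 * Nat.card (LinearMap.ker f) = Nat.card V := by
  rw [Module.natCard_eq_pow_finrank (K := ZMod 2),
    Module.natCard_eq_pow_finrank (K := ZMod 2) (V := V), Nat.card_zmod,
    ← Module.Dual.finrank_ker_add_one_of_ne_zero hf, pow_succ, mul_comm]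

end Hyperplane

lemma density_increment_of_bias {K N m c α : ℝ} (hK : 0 ≤ K) (hN : 0 < N) (hα : α = K / N)
    (hc : K ^ 3 / N ≤ c ^ 2) (hm : K + |c| ≤ 2 * m) : α * (1 + √α / 2) ≤ m / (N / 2) := by
  have hα0 : 0 ≤ α := hα ▸ by positivity
  have hbias : K * √α ≤ |c| := by
    rw [← abs_of_nonneg (mul_nonneg hK (Real.sqrt_nonneg α)), ← sq_le_sq, mul_pow,
      Real.sq_sqrt hα0, hα]
    calc K ^ 2 * (K / N) = K ^ 3 / N := by ring
      _ ≤ c ^ 2 := hc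
  have hαN : α * N = K := by rw [hα, div_mul_cancel₀ _ hN.ne']
  rw [div_div_eq_mul_div, le_div_iff₀ hN]
  calc α * (1 + √α / 2) * N = K + K * √α / 2 := by rw [← hαN]; ring
    _ ≤ K + K * √α := by linarith [mul_nonneg hK (Real.sqrt_nonneg α)]
    _ ≤ m * 2 := by linarith

open WalshFourier in
/-- Iteration lemma: either `A+A+A+A` is everything, or `A` has a density increment of
quality `α^{1/2}/2` on a coset of a codimension-1 subspace. -/
theorem iteration_lemma_pure_density
    (n : ℕ) (A : Finset (Fin n → ZMod 2)) (hA : A.Nonempty) (α : ℝ)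
    (hα : α = (A.card : ℝ) / 2 ^ n) :
    A + A + A + A = Finset.univ ∨
    ∃ (W : Submodule (ZMod 2) (Fin n → ZMod 2)) (x : Fin n → ZMod 2)
      (A' : Finset (Fin n → ZMod 2)),
        Module.finrank (ZMod 2) W + 1 = n ∧
        (A' : Set (Fin n → ZMod 2)) ⊆ (W : Set (Fin n → ZMod 2)) ∧
        A'.image (x + ·) ⊆ A ∧
        α * (1 + Real.sqrt α / 2) ≤ (A'.card : ℝ) / Nat.card W := by
  by_cases hsum : A + A + A + A = univ
  · exact .inl hsum
  obtain ⟨t, ht⟩ : ∃ t, t ∉ A + A + A + A := by simpa [eq_univ_iff_forall] using hsum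
  obtain ⟨ξ, hξ, hlarge⟩ := exists_fourierCoeff_sq_ge hA ht
  obtain ⟨v, hv⟩ := exists_card_filter_dotProduct_ge A ξ
  set f := dotProductEquiv (ZMod 2) (Fin n) ξ
  have hf : f ≠ 0 := (map_ne_zero_iff _ (dotProductEquiv _ _).injective).mpr hξ
  obtain ⟨x, A', hA'W, hA'A, hA'card⟩ := exists_translate_subset_ker hf A v
  refine .inr ⟨LinearMap.ker f, x, A', ?_, hA'W, hA'A, ?_⟩
  · simpa using Module.Dual.finrank_ker_add_one_of_ne_zero hf
  · have hW : (Nat.card (LinearMap.ker f) : ℝ) = 2 ^ n / 2 := by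
      have := two_mul_card_ker hf
      rw [Nat.card_fun, Nat.card_zmod, Nat.card_fin] at this
      rw [eq_div_iff two_ne_zero, mul_comm]
      exact_mod_cast this
    simp only [Fintype.card_fun, ZMod.card, Fintype.card_fin, Nat.cast_pow, Nat.cast_ofNat]
      at hlarge
    rw [hW, hA'card]
    refine density_increment_of_bias (by positivity) (by positivity) hα hlarge ?_
    simpa [f] using hv
end

section
/- Let G = 𝔽₂ⁿ and A, B ⊆ G nonempty with |A+B| ≤ K|B| and |B| ≤ 2ⁿ/(2K). Then there exists a nonzero character γ of G with |χ̂_A(γ)| ≥ (2K)^(−1/2)·α, where α = |A|/2ⁿ. -/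
open Finset Pointwise

/-- The Fourier transform of the indicator of `A ⊆ 𝔽₂ⁿ` at the character `γ`. -/
noncomputable def dft (n : ℕ) (A : Finset (Fin n → ZMod 2)) (γ : Fin n → ZMod 2) : ℝ :=
  (2 ^ n : ℝ)⁻¹ * ∑ x ∈ A, (-1 : ℝ) ^ ((∑ i, γ i * x i).val)

/-!
Write `Ŝ(ψ) = ∑ x ∈ S, ψ x` and let `E` be the additive energy of `A` and `B`. Cauchy–Schwarz
gives `|A|²|B|² ≤ |A + B| E ≤ K|B| E`, and orthogonality of characters gives
`2ⁿ E = ∑_ψ |Â(ψ)|² |B̂(ψ)|²`. Since `2K|B| ≤ 2ⁿ`, the trivial character contributes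
`|A|²|B|² ≤ 2ⁿ E / 2`, so the nontrivial ones contribute at least `2ⁿ E / 2 ≥ 2ⁿ |A|² |B| / (2K)`.
By Parseval for `B` they contribute at most `M² 2ⁿ |B|`, where `M` is the largest `|Â(ψ)|` with
`ψ ≠ 0`; hence `|A| ≤ √(2K) M`. Over `𝔽₂ⁿ` every complex character is `x ↦ (-1) ^ (γ ⬝ᵥ x)`.
-/

open scoped Combinatorics.Additive

namespace AddChar

variable {G : Type*} [AddCommGroup G] [Fintype G] [DecidableEq G]

lemma sum_norm_sq_sum_apply_comp {X : Type*} (S : Finset X) (φ : X → G) :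
    ∑ ψ : AddChar G ℂ, ‖∑ x ∈ S, ψ (φ x)‖ ^ 2 =
      Fintype.card G * #{p ∈ S ×ˢ S | φ p.1 = φ p.2} := by
  refine Complex.ofReal_injective ?_
  calc ((∑ ψ : AddChar G ℂ, ‖∑ x ∈ S, ψ (φ x)‖ ^ 2 : ℝ) : ℂ)
      = ∑ p ∈ S ×ˢ S, ∑ ψ : AddChar G ℂ, ψ (φ p.1 - φ p.2) := by
        push_cast
        simp_rw [← Complex.mul_conj', map_sum, ← map_neg_eq_conj, sum_mul_sum, ← map_add_eq_mul,
          ← sub_eq_add_neg, sum_product]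
        rw [sum_comm]
        exact sum_congr rfl fun _ _ ↦ sum_comm
    _ = _ := by
        simp_rw [sum_apply_eq_ite, sub_eq_zero, sum_ite, sum_const_zero, add_zero, sum_const,
          nsmul_eq_mul]
        push_cast
        ring

lemma sum_norm_sq_sum_apply (s : Finset G) :
    ∑ ψ : AddChar G ℂ, ‖∑ x ∈ s, ψ x‖ ^ 2 = Fintype.card G * #s := by
  simpa [← diag_eq_filter] using sum_norm_sq_sum_apply_comp s id

lemma sum_norm_sq_mul_norm_sq_sum_apply (s t : Finset G) :
    ∑ ψ : AddChar G ℂ, ‖∑ x ∈ s, ψ x‖ ^ 2 * ‖∑ x ∈ t, ψ x‖ ^ 2 =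
      Fintype.card G * E[s, t] := by
  rw [addEnergy_eq_card_filter, ← sum_norm_sq_sum_apply_comp (s ×ˢ t) fun p ↦ p.1 + p.2]
  simp_rw [← mul_pow, ← norm_mul, sum_mul_sum, sum_product, map_add_eq_mul]

lemma card_mul_addEnergy_le (s t : Finset G) {M : ℝ}
    (hM : ∀ ψ : AddChar G ℂ, ψ ≠ 0 → ‖∑ x ∈ s, ψ x‖ ≤ M) :
    Fintype.card G * E[s, t] ≤ (#s * #t) ^ 2 + M ^ 2 * (Fintype.card G * #t) := by
  rw [← sum_norm_sq_mul_norm_sq_sum_apply, ← add_sum_erase _ _ (mem_univ 0),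
    ← sum_norm_sq_sum_apply t, mul_sum]
  gcongr
  · simp [mul_pow]
  · calc _ ≤ ∑ ψ ∈ univ.erase (0 : AddChar G ℂ), M ^ 2 * ‖∑ x ∈ t, ψ x‖ ^ 2 := by
          gcongr with ψ hψ
          exact hM ψ (ne_of_mem_erase hψ)
      _ ≤ _ := sum_le_sum_of_subset_of_nonneg (erase_subset _ _) fun _ _ _ ↦ by positivity

lemma exists_ne_zero_card_le_sqrt_mul_norm_sum_apply {s t : Finset G} {K : ℝ} (ht : t.Nonempty)
    (hK : 1 ≤ K) (hst : #(s + t) ≤ K * #t) (ht_small : 2 * K * #t ≤ Fintype.card G) :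
    ∃ ψ : AddChar G ℂ, ψ ≠ 0 ∧ #s ≤ √(2 * K) * ‖∑ x ∈ s, ψ x‖ := by
  have ht₁ : (1 : ℝ) ≤ #t := by exact_mod_cast ht.card_pos
  have : Nontrivial (AddChar G ℂ) := by
    rw [← Fintype.one_lt_card_iff_nontrivial, card_eq]
    exact_mod_cast (by nlinarith : (1 : ℝ) < Fintype.card G)
  obtain ⟨ψ, hψ, hψ_max⟩ := exists_max_image (univ.erase (0 : AddChar G ℂ))
    (fun ψ ↦ ‖∑ x ∈ s, ψ x‖) <| (exists_ne 0).imp fun _ h ↦ mem_erase.2 ⟨h, mem_univ _⟩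
  refine ⟨ψ, ne_of_mem_erase hψ, ?_⟩
  set M := ‖∑ x ∈ s, ψ x‖
  have hE := card_mul_addEnergy_le s t fun φ hφ ↦ hψ_max φ (mem_erase.2 ⟨hφ, mem_univ _⟩)
  have hCS : ((#s * #t) ^ 2 : ℝ) ≤ #(s + t) * E[s, t] := by
    exact_mod_cast mul_pow (#s) (#t) 2 ▸ le_card_add_mul_addEnergy s t
  have hN : (0 : ℝ) < Fintype.card G := by nlinarith
  have key : (Fintype.card G * (#s * #t) ^ 2 : ℝ) ≤
      K * #t * ((#s * #t) ^ 2 + M ^ 2 * (Fintype.card G * #t)) :=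
    calc (Fintype.card G * (#s * #t) ^ 2 : ℝ)
        ≤ Fintype.card G * (#(s + t) * E[s, t]) := by gcongr
      _ = #(s + t) * (Fintype.card G * E[s, t]) := by ring
      _ ≤ #(s + t) * ((#s * #t) ^ 2 + M ^ 2 * (Fintype.card G * #t)) := by gcongr
      _ ≤ K * #t * ((#s * #t) ^ 2 + M ^ 2 * (Fintype.card G * #t)) := by gcongr
  refine (pow_le_pow_iff_left₀ (Nat.cast_nonneg _) (by positivity) two_ne_zero).1 ?_
  rw [mul_pow, Real.sq_sqrt (by linarith)]
  have hNt : (0 : ℝ) < Fintype.card G * #t ^ 2 := by positivity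
  nlinarith

end AddChar

lemma neg_one_pow_zmod_two_val_injective {R : Type*} [Ring R] (hR : (-1 : R) ≠ 1) :
    Function.Injective fun a : ZMod 2 ↦ (-1 : R) ^ a.val := by
  intro a b (h : (-1 : R) ^ a.val = (-1) ^ b.val)
  apply ZMod.val_injective
  have ha := ZMod.val_lt a
  have hb := ZMod.val_lt b
  interval_cases a.val <;> interval_cases b.val <;> simp_all [eq_comm]

variable {n : ℕ}

def walshChar (γ : Fin n → ZMod 2) : AddChar (Fin n → ZMod 2) ℂ :=
  (AddChar.zmodChar 2 (ζ := (-1 : ℂ)) (by norm_num)).compAddMonoidHom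
    (AddMonoidHom.mk' (γ ⬝ᵥ ·) (dotProduct_add γ))

lemma walshChar_apply (γ x : Fin n → ZMod 2) : walshChar γ x = (-1 : ℂ) ^ (γ ⬝ᵥ x).val := rfl

@[simp] lemma walshChar_zero : walshChar (0 : Fin n → ZMod 2) = 0 := by
  ext x; simp [walshChar_apply]

lemma walshChar_injective : Function.Injective (walshChar (n := n)) := by
  intro γ δ h
  ext i
  have hi := DFunLike.congr_fun h (Pi.single i 1)
  simp only [walshChar_apply, dotProduct_single, mul_one] at hi
  exact neg_one_pow_zmod_two_val_injective (by norm_num) hi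

lemma walshChar_surjective : Function.Surjective (walshChar (n := n)) :=
  ((Fintype.bijective_iff_injective_and_card _).2 ⟨walshChar_injective, AddChar.card_eq.symm⟩).2

lemma abs_dft (A : Finset (Fin n → ZMod 2)) (γ : Fin n → ZMod 2) :
    |dft n A γ| = (2 ^ n)⁻¹ * ‖∑ x ∈ A, walshChar γ x‖ := by
  have : ∑ x ∈ A, walshChar γ x = ((∑ x ∈ A, (-1 : ℝ) ^ (∑ i, γ i * x i).val : ℝ) : ℂ) := by
    push_cast; rfl
  rw [this, Complex.norm_real, Real.norm_eq_abs, dft, abs_mul, abs_inv, abs_pow, abs_two]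

theorem exists_large_fourier_coefficient_general
    (n : ℕ) (A B : Finset (Fin n → ZMod 2)) (hB : B.Nonempty)
    (K : ℝ) (hK : 1 ≤ K) (hadd : ((A + B).card : ℝ) ≤ K * B.card)
    (hsmall : (B.card : ℝ) ≤ 2 ^ n / (2 * K)) :
    ∃ γ : Fin n → ZMod 2, γ ≠ 0 ∧
      (2 * K) ^ (-(1 : ℝ) / 2) * ((A.card : ℝ) / 2 ^ n) ≤ |dft n A γ| := by
  have h2K : 0 < 2 * K := by linarith
  have hB_small : 2 * K * B.card ≤ Fintype.card (Fin n → ZMod 2) := by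
    simpa using (le_div_iff₀' h2K).1 hsmall
  obtain ⟨ψ, hψ, hA⟩ := AddChar.exists_ne_zero_card_le_sqrt_mul_norm_sum_apply hB hK hadd hB_small
  obtain ⟨γ, rfl⟩ := walshChar_surjective ψ
  refine ⟨γ, by rintro rfl; exact hψ walshChar_zero, ?_⟩
  rw [abs_dft, neg_div, Real.rpow_neg h2K.le, ← Real.sqrt_eq_rpow, mul_comm (2 ^ n)⁻¹,
    div_eq_mul_inv, ← mul_assoc]
  gcongr
  exact (inv_mul_le_iff₀ (Real.sqrt_pos.2 h2K)).2 hA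

/-- If `|A+B| ≤ K|B|` and `B` has density at most `1/(2K)` then the indicator of `A` has a
large nontrivial Fourier coefficient. -/
theorem exists_large_fourier_coefficient
    (n : ℕ) (A B : Finset (Fin n → ZMod 2)) (hA : A.Nonempty) (hB : B.Nonempty)
    (K : ℝ) (hK : 1 ≤ K) (hadd : ((A + B).card : ℝ) ≤ K * B.card)
    (hsmall : (B.card : ℝ) ≤ 2 ^ n / (2 * K)) :
    ∃ γ : Fin n → ZMod 2, γ ≠ 0 ∧
      (2 * K) ^ (-(1 : ℝ) / 2) * ((A.card : ℝ) / 2 ^ n) ≤ |dft n A γ| :=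
  exists_large_fourier_coefficient_general n A B hB K hK hadd hsmall
end

section
/- Let G = 𝔽₂ⁿ and A, B ⊆ G nonempty with |A+B| ≤ K|B|, and write α = |A|/2ⁿ, β = |B|/2ⁿ. Then α²β² ≤ Kβ³α² + Kβ²·max_{γ≠0} |χ̂_A(γ)|². -/
/-!
Write `N = 2ⁿ`. Cauchy–Schwarz over the fibres of `(a, b) ↦ a + b` gives
`|A|²|B|² ≤ |A + B| · E(A, B)` for the additive energy `E(A, B)`, and orthogonality of the
characters `x ↦ (-1)^(γ·x)` turns the energy into `E(A, B) = N³ Σ_γ χ̂_A(γ)² χ̂_B(γ)²`.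
The term `γ = 0` of this sum is `α²β²`; the others are at most `max_{γ≠0} χ̂_A(γ)²` times
`Σ_γ χ̂_B(γ)² = β` (Parseval).
-/

open Finset Pointwise

open scoped Combinatorics.Additive

lemma neg_one_pow_zmod_two_val_add {R : Type*} [Ring R] (a b : ZMod 2) :
    (-1 : R) ^ (a + b).val = (-1) ^ a.val * (-1) ^ b.val := by
  rw [ZMod.val_add, ← neg_one_pow_eq_pow_mod_two, pow_add]

lemma add_eq_zero_iff_eq_of_zmod_two {G : Type*} [AddCommGroup G] [Module (ZMod 2) G] {x y : G} :
    x + y = 0 ↔ x = y := by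
  rw [add_eq_zero_iff_eq_neg, ZModModule.neg_eq_self]

section Walsh

variable {ι : Type*} [Fintype ι]

noncomputable def walsh (γ : ι → ZMod 2) : AddChar (ι → ZMod 2) ℝ where
  toFun x := (-1) ^ (γ ⬝ᵥ x).val
  map_zero_eq_one' := by simp
  map_add_eq_mul' x y := by rw [dotProduct_add, neg_one_pow_zmod_two_val_add]

lemma walsh_apply (γ x : ι → ZMod 2) : walsh γ x = (-1) ^ (γ ⬝ᵥ x).val := rfl

lemma walsh_comm (γ x : ι → ZMod 2) : walsh γ x = walsh x γ := by
  rw [walsh_apply, walsh_apply, dotProduct_comm]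

variable [DecidableEq ι]

lemma walsh_eq_zero_iff {γ : ι → ZMod 2} : walsh γ = 0 ↔ γ = 0 := by
  refine ⟨fun h => ?_, by rintro rfl; ext; simp [walsh_apply]⟩
  by_contra hγ
  obtain ⟨i, hi⟩ := Function.ne_iff.1 hγ
  have hi1 : γ i = 1 := (by decide : ∀ a : ZMod 2, a ≠ 0 → a = 1) _ hi
  have := DFunLike.congr_fun h (Pi.single i 1)
  norm_num [walsh_apply, dotProduct_single, hi1, ZMod.val_one] at this

lemma sum_walsh_apply (x : ι → ZMod 2) :
    ∑ γ, walsh γ x = if x = 0 then 2 ^ Fintype.card ι else 0 := by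
  rw [Fintype.sum_congr _ _ fun γ => walsh_comm γ x, AddChar.sum_eq_ite]
  simp [walsh_eq_zero_iff]

lemma sum_sum_walsh_eq_card_filter {α : Type*} (s : Finset α) (f : α → ι → ZMod 2) :
    ∑ γ, ∑ p ∈ s, walsh γ (f p) = 2 ^ Fintype.card ι * #{p ∈ s | f p = 0} := by
  rw [sum_comm]
  simp_rw [sum_walsh_apply]
  rw [sum_ite, sum_const_zero, add_zero, sum_const, nsmul_eq_mul, mul_comm]

omit [DecidableEq ι] in
lemma sq_sum_walsh (γ : ι → ZMod 2) (s : Finset (ι → ZMod 2)) :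
    (∑ x ∈ s, walsh γ x) ^ 2 = ∑ p ∈ s ×ˢ s, walsh γ (p.1 + p.2) := by
  simp_rw [sq, sum_mul_sum, sum_product, AddChar.map_add_eq_mul]

lemma sum_sq_sum_walsh (s : Finset (ι → ZMod 2)) :
    ∑ γ, (∑ x ∈ s, walsh γ x) ^ 2 = 2 ^ Fintype.card ι * #s := by
  simp_rw [sq_sum_walsh, sum_sum_walsh_eq_card_filter, add_eq_zero_iff_eq_of_zmod_two]
  rw [← diag_card s, diag_eq_filter]

lemma sum_sq_mul_sq_sum_walsh (s t : Finset (ι → ZMod 2)) :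
    ∑ γ, (∑ a ∈ s, walsh γ a) ^ 2 * (∑ b ∈ t, walsh γ b) ^ 2 =
      2 ^ Fintype.card ι * E[s, t] := by
  have h (γ : ι → ZMod 2) : (∑ a ∈ s, walsh γ a) ^ 2 * (∑ b ∈ t, walsh γ b) ^ 2 =
      ∑ x ∈ (s ×ˢ s) ×ˢ (t ×ˢ t), walsh γ (x.1.1 + x.1.2 + (x.2.1 + x.2.2)) := by
    rw [sq_sum_walsh, sq_sum_walsh, sum_mul_sum, ← sum_product']
    simp_rw [AddChar.map_add_eq_mul]
  simp_rw [h, sum_sum_walsh_eq_card_filter, add_add_add_comm _ _ (_ : ι → ZMod 2),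
    add_eq_zero_iff_eq_of_zmod_two]
  rw [addEnergy]

end Walsh

lemma two_pow_mul_dft (n : ℕ) (A : Finset (Fin n → ZMod 2)) (γ : Fin n → ZMod 2) :
    2 ^ n * dft n A γ = ∑ x ∈ A, walsh γ x := by
  rw [dft, mul_inv_cancel_left₀ (by positivity)]
  rfl

lemma dft_zero (n : ℕ) (A : Finset (Fin n → ZMod 2)) : dft n A 0 = #A / 2 ^ n := by
  simp [dft, div_eq_inv_mul]

lemma sum_dft_sq (n : ℕ) (A : Finset (Fin n → ZMod 2)) : ∑ γ, dft n A γ ^ 2 = #A / 2 ^ n := by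
  have h := sum_sq_sum_walsh A
  simp_rw [← two_pow_mul_dft, mul_pow, ← mul_sum, Fintype.card_fin] at h
  have hN : (2 : ℝ) ^ n ≠ 0 := by positivity
  rw [eq_div_iff hN]
  apply mul_left_cancel₀ hN
  linear_combination h

lemma addEnergy_eq_sum_dft (n : ℕ) (A B : Finset (Fin n → ZMod 2)) :
    (E[A, B] : ℝ) = (2 ^ n) ^ 3 * ∑ γ, dft n A γ ^ 2 * dft n B γ ^ 2 := by
  have h := sum_sq_mul_sq_sum_walsh A B
  simp_rw [← two_pow_mul_dft, Fintype.card_fin] at h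
  apply mul_left_cancel₀ (by positivity : (2 : ℝ) ^ n ≠ 0)
  rw [← h, mul_sum, mul_sum]
  exact sum_congr rfl fun γ _ => by ring

lemma sum_sq_mul_sq_le_add_iSup_mul {α : Type*} [Fintype α] (f g : α → ℝ) (a : α) :
    ∑ x, f x ^ 2 * g x ^ 2 ≤
      f a ^ 2 * g a ^ 2 + (⨆ x : {x // x ≠ a}, |f x| ^ 2) * ∑ x, g x ^ 2 := by
  classical
  set M := ⨆ x : {x // x ≠ a}, |f x| ^ 2
  have hM (x : α) (hx : x ≠ a) : f x ^ 2 ≤ M := by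
    rw [← sq_abs]
    exact le_ciSup (f := fun x : {x // x ≠ a} => |f x| ^ 2) (Set.finite_range _).bddAbove ⟨x, hx⟩
  have hM0 : 0 ≤ M := Real.iSup_nonneg fun _ => by positivity
  rw [Fintype.sum_eq_add_sum_compl a]
  gcongr
  calc ∑ x ∈ {a}ᶜ, f x ^ 2 * g x ^ 2 ≤ ∑ x ∈ {a}ᶜ, M * g x ^ 2 :=
        sum_le_sum fun x hx => by gcongr; exact hM x (by simpa using hx)
    _ = M * ∑ x ∈ {a}ᶜ, g x ^ 2 := by rw [mul_sum]
    _ ≤ M * ∑ x, g x ^ 2 := by gcongr; exact subset_univ _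

theorem trivial_character_split_general
    (n : ℕ) (A B : Finset (Fin n → ZMod 2))
    (K : ℝ) (hadd : ((A + B).card : ℝ) ≤ K * B.card)
    (α β : ℝ) (hα : α = (A.card : ℝ) / 2 ^ n) (hβ : β = (B.card : ℝ) / 2 ^ n) :
    α ^ 2 * β ^ 2 ≤ K * β ^ 3 * α ^ 2 +
      K * β ^ 2 * ⨆ γ : {γ : Fin n → ZMod 2 // γ ≠ 0}, |dft n A γ.1| ^ 2 := by
  set S := ⨆ γ : {γ : Fin n → ZMod 2 // γ ≠ 0}, |dft n A γ.1| ^ 2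
  have hsplit := sum_sq_mul_sq_le_add_iSup_mul (dft n A) (dft n B) 0
  rw [dft_zero, dft_zero, sum_dft_sq, ← hα, ← hβ] at hsplit
  have hCS : (#A : ℝ) ^ 2 * #B ^ 2 ≤ #(A + B) * E[A, B] := by
    exact_mod_cast le_card_add_mul_addEnergy A B
  have hKβ : 0 ≤ K * β := by
    rw [hβ, ← mul_div_assoc]
    exact div_nonneg ((Nat.cast_nonneg _).trans hadd) (by positivity)
  calc α ^ 2 * β ^ 2 = (#A : ℝ) ^ 2 * #B ^ 2 / (2 ^ n) ^ 4 := by rw [hα, hβ]; ring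
    _ ≤ (#(A + B) : ℝ) * E[A, B] / (2 ^ n) ^ 4 := by gcongr
    _ ≤ K * #B * E[A, B] / (2 ^ n) ^ 4 := by gcongr
    _ = K * β * ∑ γ, dft n A γ ^ 2 * dft n B γ ^ 2 := by
      rw [addEnergy_eq_sum_dft, hβ]; field_simp
    _ ≤ K * β * (α ^ 2 * β ^ 2 + S * β) := by gcongr
    _ = K * β ^ 3 * α ^ 2 + K * β ^ 2 * S := by ring

/-- Splitting off the trivial character: `α²β² ≤ Kβ³α² + Kβ²·sup_{γ≠0}|χ̂_A(γ)|²`. -/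
theorem trivial_character_split
    (n : ℕ) (A B : Finset (Fin n → ZMod 2)) (hA : A.Nonempty) (hB : B.Nonempty)
    (K : ℝ) (hK : 1 ≤ K) (hadd : ((A + B).card : ℝ) ≤ K * B.card)
    (α β : ℝ) (hα : α = (A.card : ℝ) / 2 ^ n) (hβ : β = (B.card : ℝ) / 2 ^ n) :
    α ^ 2 * β ^ 2 ≤ K * β ^ 3 * α ^ 2 +
      K * β ^ 2 * ⨆ γ : {γ : Fin n → ZMod 2 // γ ≠ 0}, |dft n A γ.1| ^ 2 :=
  trivial_character_split_general n A B K hadd α β hα hβ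
end

section
/- Let G = 𝔽₂ⁿ, let W ≤ G be a codimension-1 subspace with cosets x+W and x'+W, and let A, B ⊆ G with |A+B| ≤ K|B|. Write A₁ = A ∩ (x+W), B₁ = B ∩ (x+W), B₂ = B ∩ (x'+W). If A₁ and B are nonempty, then |A₁+B₁| + |A₁+B₂| ≤ K(|B₁| + |B₂|); in particular there is some i ∈ {1,2} with Bᵢ nonempty and |A₁+Bᵢ| ≤ K|Bᵢ|. -/
/-! A codimension-one subspace `W` has exactly two cosets, so `B` splits as `B₁ ∪ B₂`. The sums
`A₁ + B₁` and `A₁ + B₂` lie in the cosets `x + x + W` and `x + x' + W`, which differ because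
`x' - x ∉ W`; so they are disjoint subsets of `A + B`, and
`|A₁ + B₁| + |A₁ + B₂| ≤ |A + B| ≤ K |B| = K (|B₁| + |B₂|)`. Averaging gives the second claim. -/

open Finset Pointwise
open scoped Classical

theorem Submodule.index_toAddSubgroup_eq_card {F V : Type*} [Field F] [Fintype F]
    [AddCommGroup V] [Module F V] [Finite V] (W : Submodule F V)
    (hW : Module.finrank F W + 1 = Module.finrank F V) :
    W.toAddSubgroup.index = Fintype.card F := by
  have hquot : Module.finrank F (V ⧸ W) = 1 := by
    have := W.finrank_quotient_add_finrank
    omega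
  have : Fintype V := Fintype.ofFinite V
  have : Fintype (V ⧸ W) := Fintype.ofFinite _
  rw [AddSubgroup.index, show Nat.card (V ⧸ W.toAddSubgroup) = Nat.card (V ⧸ W) from rfl,
    Nat.card_eq_fintype_card, Module.card_eq_pow_finrank (K := F), hquot, pow_one]

namespace AddSubgroup

variable {G : Type*} [AddCommGroup G] {W : AddSubgroup G} {x x' : G}

theorem sub_mem_or_sub_mem_of_index_two (hW : W.index = 2) (hxx' : x' - x ∉ W) (b : G) :
    b - x ∈ W ∨ b - x' ∈ W := by
  have := add_mem_iff_of_index_two hW (a := b - x') (b := x' - x)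
  rw [sub_add_sub_cancel] at this
  tauto

theorem disjoint_filter_sub_mem (hxx' : x' - x ∉ W) (B : Finset G) :
    Disjoint {b ∈ B | b - x ∈ W} {b ∈ B | b - x' ∈ W} :=
  disjoint_filter.mpr fun b _ hbx hbx' => hxx' <| by
    simpa using W.sub_mem hbx hbx'

theorem disjoint_add_of_sub_mem [DecidableEq G] {y : G} {A B₁ B₂ : Finset G}
    (hxx' : x' - x ∉ W) (hA : ∀ a ∈ A, a - y ∈ W) (hB₁ : ∀ b ∈ B₁, b - x ∈ W)
    (hB₂ : ∀ b ∈ B₂, b - x' ∈ W) : Disjoint (A + B₁) (A + B₂) := by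
  rw [disjoint_left]
  intro c hc₁ hc₂
  obtain ⟨a, ha, b, hb, rfl⟩ := mem_add.mp hc₁
  obtain ⟨a', ha', b', hb', hsum⟩ := mem_add.mp hc₂
  apply hxx'
  have hcoset : x' - x = (a - y + (b - x)) - (a' - y + (b' - x')) :=
    calc x' - x = a + b - (a' + b') + (x' - x) := by rw [hsum, sub_self, zero_add]
      _ = _ := by abel
  rw [hcoset]
  exact W.sub_mem (W.add_mem (hA a ha) (hB₁ b hb)) (W.add_mem (hA a' ha') (hB₂ b' hb'))

end AddSubgroup

theorem Finset.card_add_card_le_of_disjoint_of_subset {α : Type*} {s₁ s₂ t : Finset α}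
    (hdisj : Disjoint s₁ s₂) (h₁ : s₁ ⊆ t) (h₂ : s₂ ⊆ t) : #s₁ + #s₂ ≤ #t := by
  classical
  rw [← card_union_of_disjoint hdisj]
  exact card_le_card (union_subset h₁ h₂)

theorem Finset.exists_nonempty_card_add_le_mul_card {G : Type*}
    [DecidableEq G] [Add G] {A B₁ B₂ : Finset G} {K : ℝ}
    (h : (#(A + B₁) : ℝ) + #(A + B₂) ≤ K * ((#B₁ : ℝ) + #B₂)) (hne : (B₁ ∪ B₂).Nonempty) :
    (B₁.Nonempty ∧ (#(A + B₁) : ℝ) ≤ K * #B₁) ∨ (B₂.Nonempty ∧ (#(A + B₂) : ℝ) ≤ K * #B₂) := by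
  rcases B₁.eq_empty_or_nonempty with rfl | hB₁ <;> rcases B₂.eq_empty_or_nonempty with rfl | hB₂
  · simp at hne
  · simp_all
  · simp_all
  · by_contra! hlt
    linarith [hlt.1 hB₁, hlt.2 hB₂]

theorem doubling_on_cosets_general
    (n : ℕ) (W : Submodule (ZMod 2) (Fin n → ZMod 2))
    (hW : Module.finrank (ZMod 2) W + 1 = n)
    (x x' : Fin n → ZMod 2) (hxx' : x' - x ∉ W)
    (A B : Finset (Fin n → ZMod 2)) (K : ℝ)
    (hadd : ((A + B).card : ℝ) ≤ K * B.card)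
    (A₁ B₁ B₂ : Finset (Fin n → ZMod 2))
    (hA₁ : A₁ = {a ∈ A | a - x ∈ W})
    (hB₁ : B₁ = {b ∈ B | b - x ∈ W})
    (hB₂ : B₂ = {b ∈ B | b - x' ∈ W})
    (hBne : B.Nonempty) :
    (((A₁ + B₁).card : ℝ) + (A₁ + B₂).card ≤ K * ((B₁.card : ℝ) + B₂.card)) ∧
    ((B₁.Nonempty ∧ ((A₁ + B₁).card : ℝ) ≤ K * B₁.card) ∨
      (B₂.Nonempty ∧ ((A₁ + B₂).card : ℝ) ≤ K * B₂.card)) := by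
  have hindex : W.toAddSubgroup.index = 2 := by
    simpa using W.index_toAddSubgroup_eq_card (by simpa using hW)
  have hsplit : B = B₁ ∪ B₂ := by
    rw [hB₁, hB₂, ← filter_or, eq_comm, filter_eq_self]
    exact fun b _ =>
      AddSubgroup.sub_mem_or_sub_mem_of_index_two (W := W.toAddSubgroup) hindex hxx' b
  have hcardB : (#B : ℝ) = #B₁ + #B₂ := by
    rw [hsplit, card_union_of_disjoint (hB₁ ▸ hB₂ ▸
      AddSubgroup.disjoint_filter_sub_mem (W := W.toAddSubgroup) hxx' B)]
    push_cast; rfl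
  have hdisj : Disjoint (A₁ + B₁) (A₁ + B₂) :=
    AddSubgroup.disjoint_add_of_sub_mem (W := W.toAddSubgroup) (y := x) hxx'
      (by simp [hA₁]) (by simp [hB₁]) (by simp [hB₂])
  have hsum : (#(A₁ + B₁) : ℝ) + #(A₁ + B₂) ≤ K * ((#B₁ : ℝ) + #B₂) := by
    have hA₁A : A₁ ⊆ A := hA₁ ▸ filter_subset _ _
    rw [← hcardB]
    refine le_trans ?_ hadd
    exact_mod_cast card_add_card_le_of_disjoint_of_subset hdisj
      (add_subset_add hA₁A (hB₁ ▸ filter_subset _ _))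
      (add_subset_add hA₁A (hB₂ ▸ filter_subset _ _))
  exact ⟨hsum, exists_nonempty_card_add_le_mul_card hsum (hsplit ▸ hBne)⟩

/-- Restricting the doubling hypothesis to the two cosets of a codimension-1 subspace:
`|A₁+B₁| + |A₁+B₂| ≤ K(|B₁|+|B₂|)`, and hence one of the two pieces has small doubling. -/
theorem doubling_on_cosets
    (n : ℕ) (W : Submodule (ZMod 2) (Fin n → ZMod 2))
    (hW : Module.finrank (ZMod 2) W + 1 = n)
    (x x' : Fin n → ZMod 2) (hxx' : x' - x ∉ W)
    (A B : Finset (Fin n → ZMod 2)) (K : ℝ) (hK : 1 ≤ K)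
    (hadd : ((A + B).card : ℝ) ≤ K * B.card)
    (A₁ B₁ B₂ : Finset (Fin n → ZMod 2))
    (hA₁ : A₁ = {a ∈ A | a - x ∈ W})
    (hB₁ : B₁ = {b ∈ B | b - x ∈ W})
    (hB₂ : B₂ = {b ∈ B | b - x' ∈ W})
    (hA₁ne : A₁.Nonempty) (hBne : B.Nonempty) :
    (((A₁ + B₁).card : ℝ) + (A₁ + B₂).card ≤ K * ((B₁.card : ℝ) + B₂.card)) ∧
    ((B₁.Nonempty ∧ ((A₁ + B₁).card : ℝ) ≤ K * B₁.card) ∨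
      (B₂.Nonempty ∧ ((A₁ + B₂).card : ℝ) ≤ K * B₂.card)) :=
  doubling_on_cosets_general n W hW x x' hxx' A B K hadd A₁ B₁ B₂ hA₁ hB₁ hB₂ hBne
end
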